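/- arXiv:1909.09362 — 3 statements merged into one kernel-verified Lean document; each statement's English description precedes it below -/
import Mathlib

section
/- Let D = ⋃_{a ∈ {0,1}ⁿ} R_{a,n} ⊆ ℝⁿ (the model region of the chain formula Δ, whose clauses are the disjunctions of the two literals for each index). Then for every Lebesgue-measurable set Q ⊆ ℝⁿ, the volume of D ∩ Q equals ∑_{a ∈ {0,1}ⁿ} volume(R_{a,n} ∩ Q); in particular, the volume of D equals 2ⁿ·(1/n)ⁿ. -/
open MeasureTheory
open scoped ENNReal

noncomputable section

/-- The chain region `R_{a,k} ⊆ ℝᵏ` : the set of points `(x₁,…,x_k)` with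
`a₁s₁ − 1/(2n) < x₁ < a₁s₁ + 1/(2n)` and, for `2 ≤ i ≤ k`,
`x_{i−1} + a_i s_i − 1/(2n) < x_i < x_{i−1} + a_i s_i + 1/(2n)`
(indices here are 0-based). -/
def chainRegion (n k : ℕ) (hk : k ≤ n) (s : Fin n → ℕ) (a : Fin n → Bool) :
    Set (Fin k → ℝ) :=
  {x | ∀ i : Fin k,
    (if 0 < (i : ℕ) then x ⟨(i : ℕ) - 1, Nat.lt_of_le_of_lt (Nat.sub_le _ _) i.isLt⟩ else 0) +
        (if a (Fin.castLE hk i) then (s (Fin.castLE hk i) : ℝ) else 0) - 1 / (2 * (n : ℝ))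
      < x i ∧
    x i <
      (if 0 < (i : ℕ) then x ⟨(i : ℕ) - 1, Nat.lt_of_le_of_lt (Nat.sub_le _ _) i.isLt⟩ else 0) +
        (if a (Fin.castLE hk i) then (s (Fin.castLE hk i) : ℝ) else 0) + 1 / (2 * (n : ℝ))}

/-- shear map -/
def shearMap (n : ℕ) : (Fin n → ℝ) →ₗ[ℝ] (Fin n → ℝ) where
  toFun x := fun i =>
    x i - (if 0 < (i : ℕ) then x ⟨(i : ℕ) - 1, Nat.lt_of_le_of_lt (Nat.sub_le _ _) i.isLt⟩ else 0)
  map_add' x y := by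
    funext i
    by_cases h : 0 < (i : ℕ) <;> simp [h] <;> ring
  map_smul' c x := by
    funext i
    by_cases h : 0 < (i : ℕ) <;> simp [h] <;> ring

lemma shearMap_det (n : ℕ) : LinearMap.det (shearMap n) = 1 := by
  rw [← LinearMap.det_toMatrix']
  rw [Matrix.det_of_lowerTriangular]
  · rw [Finset.prod_eq_one]
    intro i _
    rw [LinearMap.toMatrix'_apply]
    simp only [shearMap, LinearMap.coe_mk, AddHom.coe_mk]
    by_cases h : 0 < (i : ℕ)
    · have : (⟨(i : ℕ) - 1, Nat.lt_of_le_of_lt (Nat.sub_le _ _) i.isLt⟩ : Fin n) ≠ i := by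
        simp [Fin.ext_iff]; omega
      simp [h, this]
    · simp [h]
  · intro i j hij
    rw [LinearMap.toMatrix'_apply]
    simp only [shearMap, LinearMap.coe_mk, AddHom.coe_mk]
    have hij' : (i : ℕ) < (j : ℕ) := OrderDual.toDual_lt_toDual.mp hij
    have h1 : i ≠ j := by simp [Fin.ext_iff]; omega
    have h2 : (⟨(i : ℕ) - 1, Nat.lt_of_le_of_lt (Nat.sub_le _ _) i.isLt⟩ : Fin n) ≠ j := by
      simp [Fin.ext_iff]; omega
    by_cases h : 0 < (i : ℕ) <;> simp [h, h1, h2]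

def offs (n : ℕ) (s : Fin n → ℕ) (a : Fin n → Bool) (i : Fin n) : ℝ :=
  if a i then (s i : ℝ) else 0

lemma chainRegion_eq_preimage (n : ℕ) (s : Fin n → ℕ) (a : Fin n → Bool) :
    chainRegion n n le_rfl s a = (shearMap n) ⁻¹'
      (Set.univ.pi fun i => Set.Ioo (offs n s a i - 1 / (2 * (n : ℝ)))
        (offs n s a i + 1 / (2 * (n : ℝ)))) := by
  ext x
  simp only [chainRegion, shearMap, offs, Set.mem_setOf_eq, Set.mem_preimage, Set.mem_pi,
    Set.mem_univ, Set.mem_Ioo, LinearMap.coe_mk, AddHom.coe_mk, forall_true_left, Fin.castLE_rfl,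
    id_eq]
  constructor
  · intro h i
    obtain ⟨h1, h2⟩ := h i
    constructor <;> linarith
  · intro h i
    obtain ⟨h1, h2⟩ := h i
    constructor <;> linarith

lemma chainRegion_volume (n : ℕ) (hn : 0 < n) (s : Fin n → ℕ) (a : Fin n → Bool) :
    volume (chainRegion n n le_rfl s a) = (1 / (n : ℝ≥0∞)) ^ n := by
  rw [chainRegion_eq_preimage]
  rw [Measure.addHaar_preimage_linearMap volume (by rw [shearMap_det]; norm_num)]
  rw [shearMap_det]
  simp only [inv_one, abs_one, ENNReal.ofReal_one, one_mul]
  rw [volume_pi_pi]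
  have hne : (n : ℝ) ≠ 0 := Nat.cast_ne_zero.mpr hn.ne'
  have : ∀ i : Fin n, volume (Set.Ioo (offs n s a i - 1 / (2 * (n : ℝ)))
      (offs n s a i + 1 / (2 * (n : ℝ)))) = 1 / (n : ℝ≥0∞) := by
    intro i
    rw [Real.volume_Ioo]
    have h1 : offs n s a i + 1 / (2 * (n : ℝ)) - (offs n s a i - 1 / (2 * (n : ℝ))) = 1 / (n : ℝ) := by
      field_simp
      norm_num
    rw [h1, ENNReal.ofReal_div_of_pos (by positivity), ENNReal.ofReal_one, ENNReal.ofReal_natCast]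
  rw [Finset.prod_congr rfl fun i _ => this i, Finset.prod_const, Finset.card_univ, Fintype.card_fin]

lemma chainRegion_disjoint (n : ℕ) (hn : 0 < n) (s : Fin n → ℕ) (hs : ∀ i, 0 < s i)
    {a b : Fin n → Bool} (hab : a ≠ b) :
    Disjoint (chainRegion n n le_rfl s a) (chainRegion n n le_rfl s b) := by
  rw [Set.disjoint_left]
  intro x hxa hxb
  obtain ⟨i, hi⟩ := Function.ne_iff.mp hab
  obtain ⟨ha1, ha2⟩ := hxa i
  obtain ⟨hb1, hb2⟩ := hxb i
  have hn' : (1 : ℝ) ≤ (n : ℝ) := by exact_mod_cast hn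
  have hsi : (1 : ℝ) ≤ (s i : ℝ) := by exact_mod_cast hs i
  have hne : (n : ℝ) ≠ 0 := by positivity
  have hpos : (0:ℝ) ≤ ((n:ℝ))⁻¹ := by positivity
  have hmul : (n : ℝ) * ((n:ℝ))⁻¹ = 1 := mul_inv_cancel₀ hne
  cases hA : a i <;> cases hB : b i <;>
    simp [hA, hB] at hi ha1 ha2 hb1 hb2 ⊢ <;>
    nlinarith [ha1, ha2, hb1, hb2, hn', hsi, hpos, hmul]


/-- let `D = ⋃_{a ∈ {0,1}ⁿ} R_{a,n}` be the model region of the chain formula.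
For every Lebesgue-measurable `Q ⊆ ℝⁿ`, `volume (D ∩ Q) = ∑_a volume (R_{a,n} ∩ Q)`;
in particular `volume D = 2ⁿ · (1/n)ⁿ`. -/
theorem chainRegion_union_volume (n : ℕ) (hn : 0 < n) (s : Fin n → ℕ) (hs : ∀ i, 0 < s i) :
    (∀ Q : Set (Fin n → ℝ), MeasurableSet Q →
      volume ((⋃ a : Fin n → Bool, chainRegion n n le_rfl s a) ∩ Q)
        = ∑ a : Fin n → Bool, volume (chainRegion n n le_rfl s a ∩ Q)) ∧
    volume (⋃ a : Fin n → Bool, chainRegion n n le_rfl s a)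
      = 2 ^ n * (1 / (n : ℝ≥0∞)) ^ n := by
  have hmeas : ∀ a : Fin n → Bool, MeasurableSet (chainRegion n n le_rfl s a) := by
    intro a
    rw [chainRegion_eq_preimage]
    exact ((shearMap n).continuous_of_finiteDimensional.measurable)
      (MeasurableSet.univ_pi fun i => measurableSet_Ioo)
  have key : ∀ Q : Set (Fin n → ℝ), MeasurableSet Q →
      volume ((⋃ a : Fin n → Bool, chainRegion n n le_rfl s a) ∩ Q)
        = ∑ a : Fin n → Bool, volume (chainRegion n n le_rfl s a ∩ Q) := by
    intro Q hQ
    rw [Set.iUnion_inter]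
    rw [measure_iUnion]
    · exact tsum_fintype _
    · intro a b hab
      exact (chainRegion_disjoint n hn s hs hab).mono Set.inter_subset_left
        Set.inter_subset_left
    · exact fun a => (hmeas a).inter hQ
  refine ⟨key, ?_⟩
  have := key Set.univ MeasurableSet.univ
  simp only [Set.inter_univ] at this
  rw [this, Finset.sum_congr rfl fun a _ => chainRegion_volume n hn s a, Finset.sum_const,
    Finset.card_univ]
  simp [Fintype.card_fun]
end
end

section
/- Let L be a positive integer and let D = ⋃_{a ∈ {0,1}ⁿ} R_{a,n} ⊆ ℝⁿ. Then nⁿ times the n-dimensional Lebesgue volume of D ∩ {x ∈ ℝⁿ : L − 1/2 < x_n < L + 1/2} equals the number of bit vectors a ∈ {0,1}ⁿ with ∑_{i=1}^{n} a_i s_i = L (equivalently, the number of subsets of the indices {1,…,n} whose corresponding integers s_i sum to L). -/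
open MeasureTheory
open scoped ENNReal

noncomputable section

/-!
The difference map `x ↦ (x_i - x_{i-1})_i` is unipotent lower triangular, hence preserves volume,
and it carries `R_{a,n}` onto the open sup-norm ball of radius `1/(2n)` around `(a_i s_i)_i`.
These balls are pairwise disjoint because every `s_i ≥ 1`, and each has volume `n⁻ⁿ`. The last
coordinate is the sum of the differences, so on `R_{a,n}` it stays within `n · 1/(2n) = 1/2` of
the integer `∑ a_i s_i`: the slab around `L` contains `R_{a,n}` when `∑ a_i s_i = L` and misses
it otherwise.
-/

open Function Metric

section DiffMap

variable {R : Type*} [CommRing R] {n : ℕ}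

def prevCoord (x : Fin n → R) (i : Fin n) : R :=
  if 0 < (i : ℕ) then x ⟨(i : ℕ) - 1, Nat.lt_of_le_of_lt (Nat.sub_le _ _) i.isLt⟩ else 0

def diffMap : (Fin n → R) →ₗ[R] (Fin n → R) where
  toFun x i := x i - prevCoord x i
  map_add' x y := by
    ext i
    simp only [Pi.add_apply, prevCoord]
    split_ifs <;> ring
  map_smul' c x := by
    ext i
    simp only [Pi.smul_apply, smul_eq_mul, RingHom.id_apply, prevCoord]
    split_ifs <;> ring

theorem diffMap_apply (x : Fin n → R) (i : Fin n) : diffMap x i = x i - prevCoord x i := rfl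

theorem prevCoord_single_of_le {i j : Fin n} (hij : i ≤ j) (c : R) :
    prevCoord (Pi.single j c) i = 0 := by
  unfold prevCoord
  split_ifs
  · exact Pi.single_eq_of_ne (Fin.ne_of_val_ne (by dsimp only; omega)) _
  · rfl

theorem det_diffMap : LinearMap.det (diffMap : (Fin n → R) →ₗ[R] (Fin n → R)) = 1 := by
  rw [← LinearMap.det_toMatrix', Matrix.det_of_isLowerTriangular]
  · refine Finset.prod_eq_one fun i _ => ?_
    simp [LinearMap.toMatrix'_apply, diffMap_apply, prevCoord_single_of_le le_rfl]
  · intro i j (hij : i < j)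
    simp [LinearMap.toMatrix'_apply, diffMap_apply, prevCoord_single_of_le hij.le, hij.ne]

theorem sum_diffMap (hn : 0 < n) (x : Fin n → R) :
    ∑ i, diffMap x i = x ⟨n - 1, Nat.sub_lt hn one_pos⟩ := by
  let X : ℕ → R := fun k => if h : 0 < k ∧ k ≤ n then x ⟨k - 1, by omega⟩ else 0
  have hterm : ∀ i : Fin n, diffMap x i = X (i + 1) - X i := by
    intro i
    by_cases hi : 0 < (i : ℕ) <;>
      simp [X, diffMap_apply, prevCoord, hi, Nat.succ_le_of_lt i.isLt]
  rw [Finset.sum_congr rfl fun i _ => hterm i,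
    Fin.sum_univ_eq_sum_range (fun k => X (k + 1) - X k), Finset.sum_range_sub]
  simp [X, hn]

end DiffMap

theorem volume_preimage_diffMap {n : ℕ} (E : Set (Fin n → ℝ)) :
    volume (diffMap ⁻¹' E) = volume E := by
  rw [Measure.addHaar_preimage_linearMap volume (by simp [det_diffMap]), det_diffMap]
  simp

def maskedWeights {ι : Type*} (s : ι → ℕ) (a : ι → Bool) : ι → ℝ :=
  fun i => if a i then (s i : ℝ) else 0

theorem sum_maskedWeights {ι : Type*} [Fintype ι] (s : ι → ℕ) (a : ι → Bool) :
    ∑ i, maskedWeights s a i = ((∑ i, if a i then s i else 0 : ℕ) : ℝ) := by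
  simp [maskedWeights, Nat.cast_ite]

theorem pairwise_disjoint_ball_maskedWeights {ι : Type*} [Fintype ι] {s : ι → ℕ}
    (hs : ∀ i, 0 < s i) {r : ℝ} (hr : 2 * r ≤ 1) :
    Pairwise (Disjoint on fun a => ball (maskedWeights s a) r) := by
  intro a b hab
  obtain ⟨i, hi⟩ := Function.ne_iff.1 hab
  refine ball_disjoint_ball ?_
  calc r + r ≤ 1 := by linarith
    _ ≤ dist (maskedWeights s a i) (maskedWeights s b i) := by
        have : (1 : ℝ) ≤ s i := by exact_mod_cast hs i
        cases ha : a i <;> cases hb : b i <;> simp_all [maskedWeights, Real.dist_eq]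
    _ ≤ dist (maskedWeights s a) (maskedWeights s b) := dist_le_pi_dist _ _ i

theorem abs_sum_sub_sum_lt_of_mem_ball {ι : Type*} [Fintype ι] [Nonempty ι] {y d : ι → ℝ}
    {r : ℝ} (hy : y ∈ ball d r) : |∑ i, y i - ∑ i, d i| < Fintype.card ι * r := by
  have hr : 0 < r := pos_of_mem_ball hy
  rw [mem_ball, dist_pi_lt_iff hr] at hy
  calc |∑ i, y i - ∑ i, d i| = |∑ i, (y i - d i)| := by rw [Finset.sum_sub_distrib]
    _ ≤ ∑ i, |y i - d i| := Finset.abs_sum_le_sum_abs _ _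
    _ < ∑ _i : ι, r := Finset.sum_lt_sum_of_nonempty Finset.univ_nonempty fun i _ => hy i
    _ = Fintype.card ι * r := by simp

theorem sub_half_lt_and_lt_add_half_iff_eq {t : ℝ} {N : ℤ} (hN : |t - N| < 1 / 2) (L : ℤ) :
    ((L : ℝ) - 1 / 2 < t ∧ t < L + 1 / 2) ↔ N = L := by
  rw [abs_sub_lt_iff] at hN
  constructor
  · rintro ⟨h₁, h₂⟩
    have h₃ : ((N - L : ℤ) : ℝ) < 1 := by push_cast; linarith
    have h₄ : ((L - N : ℤ) : ℝ) < 1 := by push_cast; linarith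
    norm_cast at h₃ h₄
    omega
  · rintro rfl
    constructor <;> linarith

theorem chainRegion_eq_preimage_ball {n : ℕ} (hn : 0 < n) (s : Fin n → ℕ) (a : Fin n → Bool) :
    chainRegion n n le_rfl s a = diffMap ⁻¹' ball (maskedWeights s a) (1 / (2 * n)) := by
  ext x
  simp only [chainRegion, Fin.castLE_rfl, id, Set.mem_ofPred_eq, Set.mem_preimage, mem_ball,
    dist_pi_lt_iff (by positivity : (0 : ℝ) < 1 / (2 * n)), Real.dist_eq, abs_sub_lt_iff,
    diffMap_apply, prevCoord, maskedWeights]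
  refine forall_congr' fun i => ?_
  constructor <;> rintro ⟨h₁, h₂⟩ <;> constructor <;> linarith

theorem mem_slab_iff_of_mem_chainRegion {n : ℕ} (hn : 0 < n) {s : Fin n → ℕ} {a : Fin n → Bool}
    {x : Fin n → ℝ} (hx : x ∈ chainRegion n n le_rfl s a) (L : ℕ) :
    ((L : ℝ) - 1 / 2 < x ⟨n - 1, Nat.sub_lt hn one_pos⟩ ∧
        x ⟨n - 1, Nat.sub_lt hn one_pos⟩ < (L : ℝ) + 1 / 2) ↔
      (∑ i, if a i then s i else 0) = L := by
  have : Nonempty (Fin n) := ⟨⟨0, hn⟩⟩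
  rw [chainRegion_eq_preimage_ball hn, Set.mem_preimage] at hx
  have hsum := abs_sum_sub_sum_lt_of_mem_ball hx
  rw [sum_diffMap hn, sum_maskedWeights, Fintype.card_fin,
    show (n : ℝ) * (1 / (2 * n)) = 1 / 2 by field_simp] at hsum
  exact_mod_cast sub_half_lt_and_lt_add_half_iff_eq (N := (∑ i, if a i then s i else 0 : ℕ))
    (by exact_mod_cast hsum) L

theorem iUnion_chainRegion_inter_slab {n : ℕ} (hn : 0 < n) (s : Fin n → ℕ) (L : ℕ) :
    (⋃ a : Fin n → Bool, chainRegion n n le_rfl s a) ∩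
        {x : Fin n → ℝ | (L : ℝ) - 1 / 2 < x ⟨n - 1, Nat.sub_lt hn one_pos⟩ ∧
          x ⟨n - 1, Nat.sub_lt hn one_pos⟩ < (L : ℝ) + 1 / 2} =
      diffMap ⁻¹' ⋃ a ∈ Finset.univ.filter
        (fun a : Fin n → Bool => (∑ i : Fin n, if a i then s i else 0) = L),
        ball (maskedWeights s a) (1 / (2 * n)) := by
  ext x
  simp only [Set.mem_inter_iff, Set.mem_iUnion, Set.mem_ofPred_eq, Set.preimage_iUnion,
    Finset.mem_filter_univ]
  constructor
  · rintro ⟨⟨a, hx⟩, hslab⟩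
    exact ⟨a, (mem_slab_iff_of_mem_chainRegion hn hx L).1 hslab,
      chainRegion_eq_preimage_ball hn s a ▸ hx⟩
  · rintro ⟨a, ha, hx⟩
    rw [← chainRegion_eq_preimage_ball hn] at hx
    exact ⟨⟨a, hx⟩, (mem_slab_iff_of_mem_chainRegion hn hx L).2 ha⟩

theorem natCast_pow_mul_volume_ball {n : ℕ} (hn : 0 < n) (c : Fin n → ℝ) :
    (n : ℝ≥0∞) ^ n * volume (ball c (1 / (2 * n))) = 1 := by
  have hn' : (n : ℝ≥0∞) ^ n ≠ 0 := pow_ne_zero _ (by exact_mod_cast hn.ne')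
  rw [Real.volume_pi_ball _ (by positivity), Fintype.card_fin,
    show 2 * (1 / (2 * (n : ℝ))) = (n : ℝ)⁻¹ by field_simp, inv_pow,
    ENNReal.ofReal_inv_of_pos (by positivity), ENNReal.ofReal_pow (by positivity),
    ENNReal.ofReal_natCast, ENNReal.mul_inv_cancel hn' (by simp)]

theorem natCast_pow_mul_volume_biUnion_ball {n : ℕ} (hn : 0 < n) {s : Fin n → ℕ}
    (hs : ∀ i, 0 < s i) (A : Finset (Fin n → Bool)) :
    (n : ℝ≥0∞) ^ n * volume (⋃ a ∈ A, ball (maskedWeights s a) (1 / (2 * n))) = A.card := by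
  have hr : 2 * (1 / (2 * (n : ℝ))) ≤ 1 := by
    rw [mul_one_div, div_le_one (by positivity)]
    exact_mod_cast Nat.le_mul_of_pos_right 2 hn
  rw [measure_biUnion_finset
      (fun a _ b _ hab => pairwise_disjoint_ball_maskedWeights hs hr hab)
      (fun _ _ => measurableSet_ball),
    Finset.mul_sum, Finset.sum_congr rfl fun a _ => natCast_pow_mul_volume_ball hn _]
  simp

theorem chainRegion_counts_subset_sums_general (n : ℕ) (hn : 0 < n) (s : Fin n → ℕ)
    (hs : ∀ i, 0 < s i) (L : ℕ) :
    (n : ℝ≥0∞) ^ n *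
      volume ((⋃ a : Fin n → Bool, chainRegion n n le_rfl s a) ∩
        {x : Fin n → ℝ | (L : ℝ) - 1 / 2 < x ⟨n - 1, Nat.sub_lt hn one_pos⟩ ∧
          x ⟨n - 1, Nat.sub_lt hn one_pos⟩ < (L : ℝ) + 1 / 2})
    = ((Finset.univ.filter
        (fun a : Fin n → Bool => (∑ i : Fin n, if a i then s i else 0) = L)).card : ℝ≥0∞) := by
  rw [iUnion_chainRegion_inter_slab hn s L, volume_preimage_diffMap,
    natCast_pow_mul_volume_biUnion_ball hn hs]

/-- Theorem 1 reduction correctness: let `L` be a positive integer and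
`D = ⋃_{a ∈ {0,1}ⁿ} R_{a,n}`. Then `nⁿ · volume (D ∩ {L − 1/2 < x_n < L + 1/2})` equals the
number of bit vectors `a ∈ {0,1}ⁿ` with `∑ a_i s_i = L`. -/
theorem chainRegion_counts_subset_sums (n : ℕ) (hn : 0 < n) (s : Fin n → ℕ)
    (hs : ∀ i, 0 < s i) (L : ℕ) (hL : 0 < L) :
    (n : ℝ≥0∞) ^ n *
      volume ((⋃ a : Fin n → Bool, chainRegion n n le_rfl s a) ∩
        {x : Fin n → ℝ | (L : ℝ) - 1 / 2 < x ⟨n - 1, Nat.sub_lt hn one_pos⟩ ∧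
          x ⟨n - 1, Nat.sub_lt hn one_pos⟩ < (L : ℝ) + 1 / 2})
    = ((Finset.univ.filter
        (fun a : Fin n → Bool => (∑ i : Fin n, if a i then s i else 0) = L)).card : ℝ≥0∞) :=
  chainRegion_counts_subset_sums_general n hn s hs L
end
end

section
/- Let L be a positive integer and let Q = {x ∈ ℝ^{2n−1} : L − 1/2 < x₁ < L + 1/2}. For every bit vector a ∈ {0,1}ⁿ: if S(a) ≠ L then the (2n−1)-dimensional Lebesgue volume of T_a ∩ Q equals 0, and if S(a) = L then the (2n−1)-dimensional Lebesgue volume of T_a ∩ Q equals (1/(2n))^{2n−1} (equivalently, T_a ⊆ Q in that case). -/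
open MeasureTheory
open scoped ENNReal

noncomputable section

/-- The value `a_{m−n+1} s_{m−n+1}` carried by a leaf of the heap-indexed binary tree
(0-based: index `j` is a leaf when `n − 1 ≤ j`, carrying `s_{j−(n−1)}`); the value is `0`
on internal nodes. -/
def leafWeight (n : ℕ) (s : Fin n → ℕ) (a : Fin n → Bool) (j : Fin (2 * n - 1)) : ℝ :=
  if _ : n - 1 ≤ (j : ℕ) then
    (if a ⟨(j : ℕ) - (n - 1), by have := j.isLt; omega⟩ then
      (s ⟨(j : ℕ) - (n - 1), by have := j.isLt; omega⟩ : ℝ) else 0)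
  else 0

/-- The tree region `T_a ⊆ ℝ^{2n−1}` : coordinates are indexed in heap order (0-based:
node `j` is internal when `j < n − 1`, with children `2j+1` and `2j+2`; the nodes
`n − 1 ≤ j` are leaves). A point `x` lies in `T_a` iff for every leaf `j`,
`a_j s_j − 1/(4n) < x_j < a_j s_j + 1/(4n)`, and for every internal node `j`,
`x_{2j+1} + x_{2j+2} − 1/(4n) < x_j < x_{2j+1} + x_{2j+2} + 1/(4n)`. -/
def treeRegion (n : ℕ) (s : Fin n → ℕ) (a : Fin n → Bool) : Set (Fin (2 * n - 1) → ℝ) :=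
  {x | (∀ j : Fin (2 * n - 1), n - 1 ≤ (j : ℕ) →
          (leafWeight n s a j - 1 / (4 * (n : ℝ)) < x j ∧
           x j < leafWeight n s a j + 1 / (4 * (n : ℝ)))) ∧
       (∀ j : Fin (2 * n - 1), ∀ h : (j : ℕ) < n - 1,
          (x ⟨2 * (j : ℕ) + 1, by omega⟩ + x ⟨2 * (j : ℕ) + 2, by omega⟩ - 1 / (4 * (n : ℝ))
              < x j ∧
           x j < x ⟨2 * (j : ℕ) + 1, by omega⟩ + x ⟨2 * (j : ℕ) + 2, by omega⟩
              + 1 / (4 * (n : ℝ))))}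

/-! Let `y = heapDiff x` subtract from every internal node of the heap the sum of its two
children. Then `x ∈ T_a` says exactly that `y` lies within `1/(4n)` of the vector `w` of leaf
weights in every coordinate. Every non-root node is a child of exactly one internal node, so
`∑ j, y j` telescopes to the root coordinate, while `∑ j, w j = S(a)`; hence
`|x_root - S(a)| < (2n - 1)/(4n) < 1/2`, and `T_a` meets `Q` only when `S(a) = L`. The map
`x ↦ y` is unitriangular, hence volume preserving, which gives `vol T_a = (1/(2n))^(2n-1)`. -/

open Finset

theorem sum_range_two_mul_add_one_sub_sum_children {G : Type*} [AddCommGroup G] (f : ℕ → G)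
    (m : ℕ) :
    ∑ i ∈ range (2 * m + 1), f i - ∑ j ∈ range m, (f (2 * j + 1) + f (2 * j + 2)) = f 0 := by
  induction m with
  | zero => simp
  | succ m ih =>
    rw [show 2 * (m + 1) + 1 = 2 * m + 1 + 1 + 1 by ring, sum_range_succ _ (2 * m + 1 + 1),
      sum_range_succ _ (2 * m + 1), sum_range_succ _ m, ← ih]
    abel

section HeapDiff

variable (R : Type*) [CommRing R] (N : ℕ)

def heapDiff : (Fin N → R) →ₗ[R] (Fin N → R) where
  toFun x j := x j -
    if h : 2 * (j : ℕ) + 2 < N then x ⟨2 * j + 1, by omega⟩ + x ⟨2 * j + 2, h⟩ else 0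
  map_add' x y := by
    funext j
    by_cases h : 2 * (j : ℕ) + 2 < N <;> simp [h]; ring
  map_smul' c x := by
    funext j
    by_cases h : 2 * (j : ℕ) + 2 < N <;> simp [h]; ring

variable {R N}

theorem heapDiff_apply (x : Fin N → R) (j : Fin N) :
    heapDiff R N x j = x j -
      if h : 2 * (j : ℕ) + 2 < N then x ⟨2 * j + 1, by omega⟩ + x ⟨2 * j + 2, h⟩ else 0 :=
  rfl

theorem sum_heapDiff (hN : Odd N) (x : Fin N → R) :
    ∑ j, heapDiff R N x j = x ⟨0, hN.pos⟩ := by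
  obtain ⟨m, rfl⟩ := hN
  let f : ℕ → R := fun i => if h : i < 2 * m + 1 then x ⟨i, h⟩ else 0
  have hchildren : (range (2 * m + 1)).filter (fun j => 2 * j + 2 < 2 * m + 1) = range m := by
    ext j; simp only [mem_filter, mem_range]; omega
  calc ∑ j, heapDiff R _ x j
      = ∑ j ∈ range (2 * m + 1),
          (f j - if 2 * j + 2 < 2 * m + 1 then f (2 * j + 1) + f (2 * j + 2) else 0) := by
        have hf : ∀ i (h : i < 2 * m + 1), f i = x ⟨i, h⟩ := fun i h => dif_pos h
        rw [← Fin.sum_univ_eq_sum_range]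
        refine sum_congr rfl fun j _ => ?_
        rw [heapDiff_apply, hf j j.isLt]
        by_cases h : 2 * (j : ℕ) + 2 < 2 * m + 1
        · rw [dif_pos h, if_pos h, hf _ (by omega), hf _ h]
        · rw [dif_neg h, if_neg h]
    _ = ∑ i ∈ range (2 * m + 1), f i - ∑ j ∈ range m, (f (2 * j + 1) + f (2 * j + 2)) := by
        rw [sum_sub_distrib, ← sum_filter, hchildren]
    _ = x ⟨0, _⟩ := by
        rw [sum_range_two_mul_add_one_sub_sum_children]
        simp [f]

theorem det_heapDiff : LinearMap.det (heapDiff R N) = 1 := by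
  rw [← LinearMap.det_toMatrix']
  have hupper : (LinearMap.toMatrix' (heapDiff R N)).IsUpperTriangular := by
    intro i j hji
    have : (j : ℕ) < i := hji
    have e0 : (i : ℕ) ≠ j := by omega
    have e1 : 2 * (i : ℕ) + 1 ≠ j := by omega
    have e2 : 2 * (i : ℕ) + 2 ≠ j := by omega
    simp [LinearMap.toMatrix'_apply, heapDiff_apply, Fin.ext_iff, e0, e1, e2]
  rw [Matrix.det_of_isUpperTriangular hupper]
  refine prod_eq_one fun i _ => ?_
  have e1 : 2 * (i : ℕ) + 1 ≠ i := by omega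
  have e2 : 2 * (i : ℕ) + 2 ≠ i := by omega
  simp [LinearMap.toMatrix'_apply, heapDiff_apply, Fin.ext_iff, e1, e2]

theorem volume_preimage_heapDiff (s : Set (Fin N → ℝ)) :
    volume (heapDiff ℝ N ⁻¹' s) = volume s := by
  rw [Measure.addHaar_preimage_linearMap _ (by simp [det_heapDiff]), det_heapDiff]
  simp

end HeapDiff

section TreeRegion

variable {n : ℕ} (s : Fin n → ℕ) (a : Fin n → Bool)

theorem leafWeight_of_lt {j : Fin (2 * n - 1)} (hj : (j : ℕ) < n - 1) : leafWeight n s a j = 0 :=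
  dif_neg (by omega)

theorem sum_leafWeight (hn : 0 < n) :
    ∑ j, leafWeight n s a j = ((∑ i : Fin n, if a i then s i else 0 : ℕ) : ℝ) := by
  push_cast
  symm
  refine sum_of_injOn (fun i => ⟨i + (n - 1), by omega⟩) (fun i _ i' _ h => ?_)
    (fun i _ => mem_univ _) (fun j _ hj => leafWeight_of_lt s a ?_) (fun i _ => ?_)
  · simpa [Fin.ext_iff] using h
  · by_contra hle
    exact hj ⟨⟨j - (n - 1), by omega⟩, by simp, by ext; simp; omega⟩
  · simp [leafWeight]

theorem treeRegion_eq_preimage_ball (hn : 0 < n) :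
    treeRegion n s a =
      heapDiff ℝ (2 * n - 1) ⁻¹' Metric.ball (leafWeight n s a) (1 / (4 * n)) := by
  ext x
  simp only [treeRegion, Set.mem_ofPred_eq, Set.mem_preimage, Metric.mem_ball,
    dist_pi_lt_iff (show (0 : ℝ) < 1 / (4 * n) by positivity), Real.dist_eq, abs_sub_lt_iff,
    heapDiff_apply]
  constructor
  · rintro ⟨hleaf, hinternal⟩ j
    by_cases hj : (j : ℕ) < n - 1
    · rw [dif_pos (by omega), leafWeight_of_lt s a hj]
      have := hinternal j hj
      constructor <;> linarith
    · rw [dif_neg (by omega)]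
      have := hleaf j (by omega)
      constructor <;> linarith
  · intro h
    refine ⟨fun j hj => ?_, fun j hj => ?_⟩
    · have := h j
      rw [dif_neg (by omega)] at this
      constructor <;> linarith
    · have := h j
      rw [dif_pos (by omega), leafWeight_of_lt s a hj] at this
      constructor <;> linarith

theorem volume_treeRegion (hn : 0 < n) :
    volume (treeRegion n s a) = (1 / (2 * (n : ℝ≥0∞))) ^ (2 * n - 1) := by
  rw [treeRegion_eq_preimage_ball s a hn, volume_preimage_heapDiff,
    Real.volume_pi_ball _ (by positivity), Fintype.card_fin, ENNReal.ofReal_pow (by positivity),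
    show 2 * (1 / (4 * (n : ℝ))) = (2 * (n : ℝ))⁻¹ by field_simp; ring,
    ENNReal.ofReal_inv_of_pos (by positivity), one_div]
  simp [ENNReal.ofReal_mul]

theorem abs_root_sub_sum_lt (hn : 0 < n) {x : Fin (2 * n - 1) → ℝ} (hx : x ∈ treeRegion n s a) :
    |x ⟨0, by omega⟩ - ((∑ i : Fin n, if a i then s i else 0 : ℕ) : ℝ)| < 1 / 2 := by
  rw [treeRegion_eq_preimage_ball s a hn, Set.mem_preimage, Metric.mem_ball,
    dist_pi_lt_iff (by positivity)] at hx
  have hodd : Odd (2 * n - 1) := ⟨n - 1, by omega⟩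
  rw [← sum_heapDiff hodd x, ← sum_leafWeight s a hn, ← sum_sub_distrib]
  calc |∑ j, (heapDiff ℝ _ x j - leafWeight n s a j)|
      ≤ ∑ j, |heapDiff ℝ _ x j - leafWeight n s a j| := abs_sum_le_sum_abs _ _
    _ < ∑ _j : Fin (2 * n - 1), 1 / (4 * (n : ℝ)) :=
        sum_lt_sum_of_nonempty ⟨⟨0, by omega⟩, mem_univ _⟩ fun j _ => hx j
    _ ≤ 1 / 2 := by
        rw [sum_const, card_univ, Fintype.card_fin, nsmul_eq_mul]
        have : ((2 * n - 1 : ℕ) : ℝ) ≤ 2 * n := by exact_mod_cast (by omega : 2 * n - 1 ≤ 2 * n)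
        calc ((2 * n - 1 : ℕ) : ℝ) * (1 / (4 * n)) ≤ 2 * n * (1 / (4 * n)) := by gcongr
          _ = 1 / 2 := by field_simp; ring

end TreeRegion

/-- let `L` be a positive integer and
`Q = {x ∈ ℝ^{2n−1} : L − 1/2 < x₁ < L + 1/2}` (constraining the root coordinate). For every
bit vector `a` : if `S(a) ≠ L` then `volume (T_a ∩ Q) = 0`, and if `S(a) = L` then
`volume (T_a ∩ Q) = (1/(2n))^{2n−1}` (indeed `T_a ⊆ Q` in that case). -/
theorem treeRegion_query (k : ℕ) (n : ℕ) (hn : n = 2 ^ k)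
    (s : Fin n → ℕ) (a : Fin n → Bool) (L : ℕ) :
    let root : Fin (2 * n - 1) := ⟨0, by have := Nat.one_le_two_pow (n := k); omega⟩
    let Q : Set (Fin (2 * n - 1) → ℝ) :=
      {x | (L : ℝ) - 1 / 2 < x root ∧ x root < (L : ℝ) + 1 / 2}
    ((∑ i : Fin n, if a i then s i else 0) ≠ L →
        volume (treeRegion n s a ∩ Q) = 0) ∧
    ((∑ i : Fin n, if a i then s i else 0) = L →
        treeRegion n s a ⊆ Q ∧
        volume (treeRegion n s a ∩ Q) = (1 / (2 * (n : ℝ≥0∞))) ^ (2 * n - 1)) := by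
  intro root Q
  have hn0 : 0 < n := hn ▸ Nat.two_pow_pos k
  set S := ∑ i : Fin n, if a i then s i else 0
  have hroot : ∀ x ∈ treeRegion n s a, |x root - S| < 1 / 2 :=
    fun x hx => abs_root_sub_sum_lt s a hn0 hx
  refine ⟨fun hSL => ?_, fun hSL => ?_⟩
  · suffices treeRegion n s a ∩ Q = ∅ by rw [this, measure_empty]
    refine Set.eq_empty_iff_forall_notMem.2 fun x ⟨hxT, hxQ⟩ => hSL ?_
    have := abs_sub_lt_iff.1 (hroot x hxT)
    have hlt : S < L + 1 := by exact_mod_cast (by linarith [hxQ.2] : (S : ℝ) < L + 1)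
    have hgt : L < S + 1 := by exact_mod_cast (by linarith [hxQ.1] : (L : ℝ) < S + 1)
    omega
  · have hTQ : treeRegion n s a ⊆ Q := fun x hx => by
      have := abs_sub_lt_iff.1 (hroot x hx)
      rw [hSL] at this
      exact ⟨by linarith, by linarith⟩
    exact ⟨hTQ, by rw [Set.inter_eq_self_of_subset_left hTQ, volume_treeRegion s a hn0]⟩
end
end
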